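/- arXiv:2305.06381 — 5 statements merged into one kernel-verified Lean document; each statement's English description precedes it below -/
import Mathlib

section
/- If C : ℝ → Matrix (Fin 2) (Fin 2) ℝ is differentiable, satisfies the Riccati equation C'(t) = C(t)², and is defined for all t ∈ ℝ, then every real eigenvalue of C(0) is zero. -/
/-!
If `C 0 *ᵥ v = μ • v`, then along the Riccati flow `C t *ᵥ v` should be `μ / (1 - t μ) • v`.
To make this rigorous without dividing, note that `z t = (1 - t μ) • C t *ᵥ v - μ • v` solves
the linear equation `z' = C t *ᵥ z` with `z 0 = 0`, so `z` vanishes identically by uniqueness of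
solutions of linear ODEs with continuous coefficients. At `t = 1 / μ` this says `μ • v = 0`.
-/

open Set Matrix

theorem ODE_linear_eq_zero_of_eq_zero {E : Type*} [NormedAddCommGroup E] [NormedSpace ℝ E]
    {A : ℝ → E →L[ℝ] E} (hA : Continuous A) {z : ℝ → E}
    (hz : ∀ t, HasDerivAt z (A t (z t)) t) {t₀ : ℝ} (hz₀ : z t₀ = 0) : z = 0 := by
  ext t
  obtain ⟨a, b, ht, ht₀⟩ : ∃ a b, t ∈ Ioo a b ∧ t₀ ∈ Ioo a b :=
    ⟨min t t₀ - 1, max t t₀ + 1, by grind⟩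
  obtain ⟨K, hK⟩ := isCompact_Icc.exists_bound_of_continuousOn (hA.continuousOn (s := Icc a b))
  have hlip : ∀ s ∈ Ioo a b, LipschitzOnWith K.toNNReal (A s) univ := fun s hs =>
    ((A s).lipschitz.weaken (by
      rw [← NNReal.coe_le_coe, coe_nnnorm]
      exact (hK s (Ioo_subset_Icc_self hs)).trans (Real.le_coe_toNNReal K))).lipschitzOnWith
  exact ODE_solution_unique_of_mem_Ioo hlip ht₀ (fun s _ => ⟨hz s, mem_univ _⟩)
    (fun s _ => ⟨by simp, mem_univ _⟩) hz₀ ht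

section

variable {n : Type*} [Fintype n]

theorem Matrix.continuous_toContinuousLinearMap_toLin' [DecidableEq n] :
    Continuous fun M : Matrix n n ℝ => LinearMap.toContinuousLinearMap (toLin' M) :=
  (LinearMap.toContinuousLinearMap.toLinearMap ∘ₗ
    (toLin' : Matrix n n ℝ ≃ₗ[ℝ] _).toLinearMap).continuous_of_finiteDimensional

theorem ODE_mulVec_eq_zero_of_eq_zero {A : ℝ → Matrix n n ℝ} (hA : Continuous A)
    {z : ℝ → n → ℝ} (hz : ∀ t, HasDerivAt z (A t *ᵥ z t) t) {t₀ : ℝ} (hz₀ : z t₀ = 0) :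
    z = 0 := by
  classical
  exact ODE_linear_eq_zero_of_eq_zero (continuous_toContinuousLinearMap_toLin'.comp hA) hz hz₀

theorem hasDerivAt_mulVec_const {C : ℝ → Matrix n n ℝ} {C' : Matrix n n ℝ} {t : ℝ}
    (hC : ∀ i j, HasDerivAt (fun s => C s i j) (C' i j) t) (v : n → ℝ) :
    HasDerivAt (fun s => C s *ᵥ v) (C' *ᵥ v) t :=
  hasDerivAt_pi.2 fun i => HasDerivAt.fun_sum fun j _ => (hC i j).mul_const (v j)

theorem hasDerivAt_riccati_eigen_defect [DecidableEq n] {C : ℝ → Matrix n n ℝ}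
    (hC : ∀ t i j, HasDerivAt (fun s => C s i j) ((C t ^ 2) i j) t) (μ : ℝ) (v : n → ℝ)
    (t : ℝ) :
    HasDerivAt (fun s => (1 - s * μ) • (C s *ᵥ v) - μ • v)
      (C t *ᵥ ((1 - t * μ) • (C t *ᵥ v) - μ • v)) t := by
  refine (((((hasDerivAt_id t).mul_const μ).const_sub 1).smul
    (hasDerivAt_mulVec_const (hC t) v)).sub_const (μ • v)).congr_deriv ?_
  simp only [id, mulVec_sub, mulVec_smul, pow_two, ← mulVec_mulVec]
  module

end

theorem stmt1 (C : ℝ → Matrix (Fin 2) (Fin 2) ℝ)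
    (hC : ∀ t i j, HasDerivAt (fun s => C s i j) ((C t ^ 2) i j) t)
    (μ : ℝ) (v : Fin 2 → ℝ) (hv : v ≠ 0) (heig : (C 0).mulVec v = μ • v) :
    μ = 0 := by
  by_contra hμ
  have hCcont : Continuous C := continuous_pi fun i => continuous_pi fun j =>
    continuous_iff_continuousAt.2 fun t => (hC t i j).continuousAt
  have hz : (fun s => (1 - s * μ) • (C s *ᵥ v) - μ • v) = 0 :=
    ODE_mulVec_eq_zero_of_eq_zero hCcont (hasDerivAt_riccati_eigen_defect hC μ v) (t₀ := 0)
      (by simp [heig])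
  have hμv : μ • v = 0 := by simpa [hμ] using congrFun hz μ⁻¹
  exact hv ((smul_eq_zero.1 hμv).resolve_left hμ)
end

section
/- Let C : ℝ → Matrix (Fin 2) (Fin 2) ℝ be differentiable with C'(t) = C(t)² for all t. Then the functions x(t) = tr(C(t)) and y(t) = det(C(t)) satisfy x' = x² − 2y and y' = x·y. -/
/-!
The trace is linear, so `(tr C)' = tr (C²) = (tr C)² - 2 det C` by Cayley–Hamilton in dimension
two. For the determinant, Jacobi's formula `(det C)' = tr (adj C · C')` together with
`adj C · C² = (adj C · C) · C = det C · C` gives `(det C)' = tr C · det C`, in any dimension.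
-/

open Matrix Finset Equiv

theorem Matrix.prod_updateCol_perm {R n : Type*} [CommRing R] [Fintype n] [DecidableEq n]
    (M : Matrix n n R) (σ : Perm n) (j : n) (v : n → R) :
    ∏ i, M.updateCol j v (σ i) i = (∏ i ∈ univ.erase j, M (σ i) i) * v (σ j) := by
  rw [← prod_erase_mul _ _ (mem_univ j), updateCol_self]
  congr 1
  exact prod_congr rfl fun i hi => updateCol_ne (ne_of_mem_erase hi)

theorem Matrix.trace_adjugate_mul {R n : Type*} [CommRing R] [Fintype n] [DecidableEq n]
    (A B : Matrix n n R) :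
    trace (adjugate A * B) = ∑ j, (A.updateCol j (fun i => B i j)).det := by
  simp only [trace, diag, ← cramer_apply, cramer_eq_adjugate_mulVec, mulVec, dotProduct, mul_apply]

theorem Matrix.trace_adjugate_mul_sq {R n : Type*} [CommRing R] [Fintype n] [DecidableEq n]
    (A : Matrix n n R) : trace (adjugate A * A ^ 2) = trace A * A.det := by
  rw [sq, ← Matrix.mul_assoc, adjugate_mul, smul_mul, one_mul, trace_smul, smul_eq_mul, mul_comm]

theorem Matrix.trace_sq_fin_two {R : Type*} [CommRing R] (A : Matrix (Fin 2) (Fin 2) R) :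
    trace (A ^ 2) = trace A ^ 2 - 2 * A.det := by
  simp only [sq, trace_fin_two, det_fin_two, mul_apply, Fin.sum_univ_two]
  ring

section Derivatives

variable {𝕜 n : Type*} [NontriviallyNormedField 𝕜] [Fintype n]
  {C : 𝕜 → Matrix n n 𝕜} {C' : Matrix n n 𝕜} {t : 𝕜}

theorem Matrix.hasDerivAt_trace (hC : ∀ i j, HasDerivAt (fun s => C s i j) (C' i j) t) :
    HasDerivAt (fun s => trace (C s)) (trace C') t :=
  HasDerivAt.fun_sum fun i _ => hC i i

theorem Matrix.hasDerivAt_det [DecidableEq n]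
    (hC : ∀ i j, HasDerivAt (fun s => C s i j) (C' i j) t) :
    HasDerivAt (fun s => (C s).det) (trace (adjugate (C t) * C')) t := by
  have hexpand : trace (adjugate (C t) * C') = ∑ σ : Perm n,
      ((Perm.sign σ : ℤ) : 𝕜) * ∑ j, (∏ i ∈ univ.erase j, C t (σ i) i) * C' (σ j) j := by
    simp only [trace_adjugate_mul, det_apply', prod_updateCol_perm, mul_sum]
    exact sum_comm
  simp only [det_apply', hexpand]
  refine HasDerivAt.fun_sum fun σ _ => ?_
  simpa only [smul_eq_mul] using
    (HasDerivAt.fun_finsetProd fun i _ => hC (σ i) i).const_mul ((Perm.sign σ : ℤ) : 𝕜)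

end Derivatives

theorem stmt2 (C : ℝ → Matrix (Fin 2) (Fin 2) ℝ)
    (hC : ∀ t i j, HasDerivAt (fun s => C s i j) ((C t ^ 2) i j) t) (t : ℝ) :
    HasDerivAt (fun s => Matrix.trace (C s))
      ((Matrix.trace (C t)) ^ 2 - 2 * Matrix.det (C t)) t ∧
    HasDerivAt (fun s => Matrix.det (C s))
      (Matrix.trace (C t) * Matrix.det (C t)) t := by
  constructor
  · rw [← trace_sq_fin_two]
    exact hasDerivAt_trace (hC t)
  · rw [← trace_adjugate_mul_sq]
    exact hasDerivAt_det (hC t)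
end

section
/- Let f : ℝ → ℝ be twice differentiable with f'' + K·f = 0 where K(t) ≤ 0 for all t, f(0) > 0 and f'(0) ≥ 0. Then f(t) > 0 for all t ≥ 0. -/
theorem stmt8 (f f' f'' K : ℝ → ℝ)
    (hf : ∀ t, HasDerivAt f (f' t) t)
    (hf' : ∀ t, HasDerivAt f' (f'' t) t)
    (hjacobi : ∀ t, f'' t + K t * f t = 0)
    (hK : ∀ t, K t ≤ 0)
    (h0 : 0 < f 0) (h0' : 0 ≤ f' 0) :
    ∀ t, 0 ≤ t → 0 < f t := by
  intro t ht
  by_contra hft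
  push_neg at hft
  set A : Set ℝ := {s | s ∈ Set.Icc 0 t ∧ f s ≤ 0} with hA
  have hAne : A.Nonempty := ⟨t, ⟨ht, le_refl t⟩, hft⟩
  have hAbdd : BddBelow A := ⟨0, fun s hs => hs.1.1⟩
  have hAclosed : IsClosed A := by
    have : A = Set.Icc 0 t ∩ f ⁻¹' Set.Iic 0 := by
      ext s; simp [hA, Set.mem_Icc]
    rw [this]
    exact isClosed_Icc.inter (IsClosed.preimage
      (continuous_iff_continuousAt.mpr fun s => (hf s).continuousAt) isClosed_Iic)
  set t₀ := sInf A with ht₀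
  have ht₀A : t₀ ∈ A := hAclosed.csInf_mem hAne hAbdd
  have ht₀0 : 0 ≤ t₀ := ht₀A.1.1
  have ht₀t : t₀ ≤ t := ht₀A.1.2
  have ht₀pos : 0 < t₀ := by
    rcases ht₀0.lt_or_eq with h | h
    · exact h
    · exfalso; rw [← h] at ht₀A; linarith [ht₀A.2, h0]
  have hpos : ∀ s, 0 ≤ s → s < t₀ → 0 < f s := by
    intro s hs hst
    by_contra hfs
    push_neg at hfs
    have : s ∈ A := ⟨⟨hs, hst.le.trans ht₀t⟩, hfs⟩
    exact absurd (csInf_le hAbdd this) (not_le.mpr hst)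
  -- f' is monotone on [0, t₀]
  have hderiv' : ∀ s, deriv f' s = f'' s := fun s => (hf' s).deriv
  have hderiv : ∀ s, deriv f s = f' s := fun s => (hf s).deriv
  have hmono' : MonotoneOn f' (Set.Icc 0 t₀) := by
    apply monotoneOn_of_deriv_nonneg (convex_Icc 0 t₀)
      (fun s _ => (hf' s).continuousAt.continuousWithinAt)
      (fun s _ => (hf' s).differentiableAt.differentiableWithinAt)
    intro s hs
    rw [interior_Icc] at hs
    rw [hderiv']
    have hfspos : 0 < f s := hpos s hs.1.le hs.2
    have := hjacobi s
    nlinarith [hK s]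
  have hf'nonneg : ∀ s ∈ Set.Icc (0:ℝ) t₀, 0 ≤ f' s := by
    intro s hs
    calc (0:ℝ) ≤ f' 0 := h0'
    _ ≤ f' s := hmono' (Set.left_mem_Icc.mpr ht₀0) hs hs.1
  have hmono : MonotoneOn f (Set.Icc 0 t₀) := by
    apply monotoneOn_of_deriv_nonneg (convex_Icc 0 t₀)
      (fun s _ => (hf s).continuousAt.continuousWithinAt)
      (fun s _ => (hf s).differentiableAt.differentiableWithinAt)
    intro s hs
    rw [interior_Icc] at hs
    rw [hderiv]
    exact hf'nonneg s ⟨hs.1.le, hs.2.le⟩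
  have : f 0 ≤ f t₀ :=
    hmono (Set.left_mem_Icc.mpr ht₀0) (Set.right_mem_Icc.mpr ht₀0) ht₀0
  linarith [ht₀A.2]
end

section
/- Let η : ℝ → ℝ satisfy η'' = −(Scal/2)·η with Scal < 0 constant, η(0) = 1, η'(0) = k with |k| > √(−Scal/2). Then η has a zero. -/
/-!
Write `μ = √(-Scal / 2)`. The combinations `η' + μ η` and `η' - μ η` solve `g' = μ g` and
`g' = -μ g`, hence equal `(k + μ) e^{μu}` and `(k - μ) e^{-μu}`, so
`2 μ η u = (k + μ) e^{μu} - (k - μ) e^{-μu}`. Since `|k| > μ` the two coefficients have the same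
sign, and the difference vanishes at `u = log ((k - μ) / (k + μ)) / (2 μ)`.
-/

open Real

theorem eq_mul_exp_of_hasDerivAt_mul {g : ℝ → ℝ} {a : ℝ} (hg : ∀ u, HasDerivAt g (a * g u) u)
    (u : ℝ) : g u = g 0 * exp (a * u) := by
  have hderiv : ∀ x, HasDerivAt (fun x => g x * exp (-a * x)) 0 x := fun x =>
    ((hg x).mul ((hasDerivAt_id' x).const_mul (-a)).exp).congr_deriv (by ring)
  have hconst := is_const_of_deriv_eq_zero (fun x => (hderiv x).differentiableAt)
    (fun x => (hderiv x).deriv) u 0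
  simp only [mul_zero, exp_zero, mul_one] at hconst
  rw [← hconst, mul_assoc, ← exp_add, neg_mul, neg_add_cancel, exp_zero, mul_one]

theorem two_mul_mul_eq_of_hasDerivAt_sq_mul {η η' : ℝ → ℝ} {μ : ℝ}
    (hη : ∀ u, HasDerivAt η (η' u) u) (hη' : ∀ u, HasDerivAt η' (μ ^ 2 * η u) u) (u : ℝ) :
    2 * μ * η u = (η' 0 + μ * η 0) * exp (μ * u) - (η' 0 - μ * η 0) * exp (-μ * u) := by
  have hplus := eq_mul_exp_of_hasDerivAt_mul (g := fun u => η' u + μ * η u) (a := μ)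
    (fun u => ((hη' u).add ((hη u).const_mul μ)).congr_deriv (by ring)) u
  have hminus := eq_mul_exp_of_hasDerivAt_mul (g := fun u => η' u - μ * η u) (a := -μ)
    (fun u => ((hη' u).sub ((hη u).const_mul μ)).congr_deriv (by ring)) u
  linear_combination hplus - hminus

theorem exists_mul_exp_sub_mul_exp_neg_eq_zero {μ p q : ℝ} (hμ : μ ≠ 0) (hpq : 0 < p * q) :
    ∃ u, p * exp (μ * u) - q * exp (-μ * u) = 0 := by
  have hp : p ≠ 0 := by rintro rfl; simp at hpq
  have hqp : 0 < q / p := by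
    rw [show q / p = p * q / p ^ 2 by field_simp]
    positivity
  refine ⟨log (q / p) / (2 * μ), ?_⟩
  set t := μ * (log (q / p) / (2 * μ))
  have hexp : exp t ^ 2 = q / p := by
    rw [sq, ← exp_add, show t + t = log (q / p) by simp only [t]; field_simp; ring, exp_log hqp]
  have hneg : exp (-μ * (log (q / p) / (2 * μ))) = (exp t)⁻¹ := by
    rw [neg_mul, exp_neg]
  rw [hneg, sub_eq_zero, eq_mul_inv_iff_mul_eq₀ (exp_pos t).ne', mul_assoc, ← sq, hexp,
    mul_div_cancel₀ _ hp]

theorem stmt13 (η η' : ℝ → ℝ) (Scal k : ℝ) (hScal : Scal < 0)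
    (hη : ∀ u, HasDerivAt η (η' u) u)
    (hη' : ∀ u, HasDerivAt η' (-(Scal / 2) * η u) u)
    (h0 : η 0 = 1) (h0' : η' 0 = k)
    (hk : Real.sqrt (-Scal / 2) < |k|) :
    ∃ u : ℝ, η u = 0 := by
  set μ := √(-Scal / 2)
  have hμ : 0 < μ := sqrt_pos.mpr (by linarith)
  have hμ_sq : μ ^ 2 = -(Scal / 2) := by rw [sq_sqrt (by linarith), neg_div]
  have hcoeff : 0 < (k + μ) * (k - μ) := by
    have : μ ^ 2 < k ^ 2 := sq_lt_sq.mpr (by rwa [abs_of_pos hμ])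
    nlinarith
  obtain ⟨u, hu⟩ := exists_mul_exp_sub_mul_exp_neg_eq_zero hμ.ne' hcoeff
  have h := two_mul_mul_eq_of_hasDerivAt_sq_mul hη (hμ_sq ▸ hη') u
  rw [h0, h0', mul_one, hu, mul_eq_zero] at h
  exact ⟨u, h.resolve_left (by positivity)⟩
end

section
/- A subgroup G of the isometry group of ℝ (with the standard metric) that acts freely and properly discontinuously on ℝ is either trivial or infinite cyclic (isomorphic to ℤ). -/
theorem stmt15 (G : Subgroup (ℝ ≃ᵢ ℝ))
    (hfree : ∀ g ∈ G, (∃ x : ℝ, g x = x) → g = 1)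
    (hpd : ∀ K : Set ℝ, IsCompact K →
      {g : ℝ ≃ᵢ ℝ | g ∈ G ∧ (g '' K ∩ K).Nonempty}.Finite) :
    G = ⊥ ∨ Nonempty (G ≃* Multiplicative ℤ) := by
  -- Step 1: every element of G is a translation
  have key : ∀ g ∈ G, ∀ x : ℝ, g x = x + g 0 := by
    intro g hg
    have hdist : ∀ x y : ℝ, |g x - g y| = |x - y| := by
      intro x y
      rw [← Real.dist_eq, ← Real.dist_eq]
      exact g.dist_eq x y
    by_cases hrefl : ∀ x : ℝ, g x = g 0 - x
    · -- g is a reflection, hence has a fixed point, hence g = 1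
      have hfix : g (g 0 / 2) = g 0 / 2 := by rw [hrefl]; ring
      have h1 : g = 1 := hfree g hg ⟨_, hfix⟩
      intro x
      simp [h1]
    · push_neg at hrefl
      obtain ⟨x₀, hx₀⟩ := hrefl
      have hx₀ne : x₀ ≠ 0 := by
        intro h
        apply hx₀
        rw [h]; ring
      have hgx₀ : g x₀ = g 0 + x₀ := by
        have := hdist x₀ 0
        rw [sub_zero] at this
        rcases abs_eq_abs.mp this with h | h
        · linarith
        · exfalso; apply hx₀; linarith
      intro x
      have h1 := hdist x 0
      rw [sub_zero] at h1
      rcases abs_eq_abs.mp h1 with h | h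
      · linarith
      · -- g x = g 0 - x; compare with x₀
        have h2 := hdist x x₀
        rw [hgx₀] at h2
        have hx : g x = g 0 - x := by linarith
        rw [hx] at h2
        have h3 : |(-(x + x₀))| = |x - x₀| := by
          convert h2 using 2; ring
        rw [abs_neg] at h3
        have h4 : (x + x₀) ^ 2 = (x - x₀) ^ 2 := by
          rw [← sq_abs (x + x₀), ← sq_abs (x - x₀), h3]
        have h5 : x * x₀ = 0 := by nlinarith
        have hx0 : x = 0 := by
          rcases mul_eq_zero.mp h5 with h | h
          · exact h
          · exact absurd h hx₀ne
        rw [hx0] at hx ⊢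
        rw [hx]; ring
  -- Step 2: the monoid hom g ↦ g 0 into Multiplicative ℝ
  let f : G →* Multiplicative ℝ :=
    { toFun := fun g => Multiplicative.ofAdd ((g : ℝ ≃ᵢ ℝ) 0)
      map_one' := by simp
      map_mul' := by
        intro g h
        have : ((g : ℝ ≃ᵢ ℝ) * (h : ℝ ≃ᵢ ℝ)) 0 = (h : ℝ ≃ᵢ ℝ) 0 + (g : ℝ ≃ᵢ ℝ) 0 := by
          have : ((g : ℝ ≃ᵢ ℝ) * (h : ℝ ≃ᵢ ℝ)) 0 = (g : ℝ ≃ᵢ ℝ) ((h : ℝ ≃ᵢ ℝ) 0) := rfl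
          rw [this, key g g.2 ((h : ℝ ≃ᵢ ℝ) 0)]
        simp only [Subgroup.coe_mul]
        rw [this]
        rw [add_comm]
        rfl }
  have hfval : ∀ g : G, f g = Multiplicative.ofAdd ((g : ℝ ≃ᵢ ℝ) 0) := fun _ => rfl
  have hinj : Function.Injective f := by
    intro g h hf
    have h0 : (g : ℝ ≃ᵢ ℝ) 0 = (h : ℝ ≃ᵢ ℝ) 0 := by
      have := congrArg Multiplicative.toAdd hf
      simpa [hfval] using this
    ext x
    rw [key g g.2 x, key h h.2 x, h0]
  -- Step 3: the corresponding additive subgroup of ℝ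
  set S : AddSubgroup ℝ := Subgroup.toAddSubgroup' f.range with hSdef
  have hmemS : ∀ b : ℝ, b ∈ S ↔ ∃ g : G, (g : ℝ ≃ᵢ ℝ) 0 = b := by
    intro b
    constructor
    · rintro ⟨g, hg⟩
      exact ⟨g, hg⟩
    · rintro ⟨g, hg⟩
      exact ⟨g, hg⟩
  -- S ∩ [-1,1] is finite by proper discontinuity
  have hfin : ((S : Set ℝ) ∩ Set.Icc (-1) 1).Finite := by
    have hK : IsCompact (Set.Icc (-1 : ℝ) 1) := isCompact_Icc
    have hF := hpd (Set.Icc (-1) 1) hK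
    apply Set.Finite.subset (hF.image fun g => g 0)
    rintro b ⟨hbS, hb⟩
    obtain ⟨g, hg⟩ := (hmemS b).mp hbS
    refine ⟨(g : ℝ ≃ᵢ ℝ), ⟨g.2, ⟨b, ⟨⟨0, ?_, hg⟩, hb⟩⟩⟩, hg⟩
    constructor <;> norm_num
  -- S is not dense
  have hnotdense : ¬ Dense (S : Set ℝ) := by
    intro hd
    have hsub : Set.Ioo (-1 : ℝ) 1 ⊆ closure ((S : Set ℝ) ∩ Set.Icc (-1) 1) := by
      intro x hx
      rw [mem_closure_iff]
      intro U hU hxU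
      have hU' : IsOpen (U ∩ Set.Ioo (-1 : ℝ) 1) := hU.inter isOpen_Ioo
      have hxU' : x ∈ U ∩ Set.Ioo (-1 : ℝ) 1 := ⟨hxU, hx⟩
      obtain ⟨y, hyS, hyU⟩ := hd.exists_mem_open hU' ⟨x, hxU'⟩
      exact ⟨y, hyU.1, hyS, Set.Ioo_subset_Icc_self hyU.2⟩
    have := hsub.trans (Set.Subset.antisymm_iff.mp hfin.isClosed.closure_eq).1
    exact (Set.Ioo_infinite (by norm_num)) (hfin.subset this)
  -- S is cyclic
  rcases S.dense_or_cyclic with hd | ⟨a, ha⟩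
  · exact absurd hd hnotdense
  rcases eq_or_ne a 0 with rfl | hane
  · -- trivial subgroup
    left
    rw [eq_bot_iff]
    intro g hg
    have hg0 : (⟨g, hg⟩ : G) = (1 : G) → g = 1 := fun h => congrArg Subtype.val h
    have hb : g 0 ∈ S := (hmemS _).mpr ⟨⟨g, hg⟩, rfl⟩
    rw [ha] at hb
    have h0 : g 0 = 0 := by
      rcases AddSubgroup.mem_closure_singleton.mp hb with ⟨n, hn⟩
      simpa using hn.symm
    have hg1 : g = 1 := by
      ext x
      rw [key g hg x, h0]
      simp
    simp [hg1]
  · -- infinite cyclic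
    right
    have haS : a ∈ S := by
      rw [ha]
      exact AddSubgroup.mem_closure_singleton.mpr ⟨1, one_smul _ _⟩
    obtain ⟨g₀, hg₀⟩ := (hmemS a).mp haS
    let ψ : Multiplicative ℤ →* G := zpowersHom G g₀
    have hψval : ∀ n : ℤ, f (ψ (Multiplicative.ofAdd n)) = Multiplicative.ofAdd (n • a) := by
      intro n
      have : ψ (Multiplicative.ofAdd n) = g₀ ^ n := rfl
      rw [this, map_zpow, hfval g₀, hg₀]
      rfl
    have hψinj : Function.Injective ψ := by
      intro m n hmn
      have h1 := hψval (Multiplicative.toAdd m)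
      have h2 := hψval (Multiplicative.toAdd n)
      rw [ofAdd_toAdd] at h1 h2
      rw [hmn, h2] at h1
      have h3 : (Multiplicative.toAdd m) • a = (Multiplicative.toAdd n) • a := by
        simpa using congrArg Multiplicative.toAdd h1.symm
      have h4 := smul_left_injective ℤ hane h3
      exact Multiplicative.toAdd.injective h4
    have hψsurj : Function.Surjective ψ := by
      intro g
      have hb : (g : ℝ ≃ᵢ ℝ) 0 ∈ S := (hmemS _).mpr ⟨g, rfl⟩
      rw [ha] at hb
      obtain ⟨n, hn⟩ := AddSubgroup.mem_closure_singleton.mp hb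
      refine ⟨Multiplicative.ofAdd n, hinj ?_⟩
      rw [hψval n, hfval g, hn]
    exact ⟨(MulEquiv.ofBijective ψ ⟨hψinj, hψsurj⟩).symm⟩
end
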